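/- For a strictly convex quadratic E(x) = (1/2)xᵀAx - bᵀx minimized by successive exact line searches along pairwise A-conjugate nonzero directions d₁, …, dₙ starting from any x₀, the iterate xₙ is the exact global minimizer x* = A⁻¹b. -/

import Mathlib

/-!
Write `r_k = A x_k - b` for the gradient at the `k`-th iterate. The exact line search along `d_k`
makes `r_{k+1}` orthogonal to `d_k`, and each later step changes the residual by a multiple of
`A d_j` with `j ≠ k`, which is orthogonal to `d_k` by conjugacy. Hence `r_n` is orthogonal to all
of `d_0, …, d_{n-1}`; these are linearly independent (conjugate and nonzero), so they span `ℝⁿ`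
and `r_n = 0`, i.e. `A x_n = b`.
-/

open Matrix

section ConjugateDirections

variable {K : Type*} [Field K] {m : Type*} [Fintype m]

theorem linearIndependent_of_conjugate [DecidableEq m] {ι : Type*} {A : Matrix m m K}
    {d : ι → m → K} (hconj : ∀ i j, i ≠ j → d i ⬝ᵥ A *ᵥ d j = 0)
    (hnz : ∀ i, d i ⬝ᵥ A *ᵥ d i ≠ 0) : LinearIndependent K d :=
  LinearMap.BilinForm.linearIndependent_of_iIsOrtho (B := toBilin' A)
    (LinearMap.BilinForm.iIsOrtho_def.mpr fun i j hij => by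
      rw [toBilin'_apply']; exact hconj i j hij)
    fun i => by rw [toBilin'_apply']; exact hnz i

theorem eq_zero_of_forall_dotProduct_eq_zero_of_linearIndependent [DecidableEq m]
    {d : m → m → K} (hd : LinearIndependent K d) {v : m → K} (hv : ∀ i, d i ⬝ᵥ v = 0) :
    v = 0 :=
  mulVec_injective_iff_isUnit.mpr (linearIndependent_rows_iff_isUnit.mp hd)
    ((funext hv).trans (mulVec_zero (of d)).symm)

theorem residual_dotProduct_exactLineSearch_eq_zero (A : Matrix m m K) (b x d : m → K)
    (hd : d ⬝ᵥ A *ᵥ d ≠ 0) :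
    (A *ᵥ (x + (-((A *ᵥ x - b) ⬝ᵥ d) / (d ⬝ᵥ A *ᵥ d)) • d) - b) ⬝ᵥ d = 0 := by
  rw [mulVec_add, mulVec_smul, add_sub_right_comm, add_dotProduct, smul_dotProduct,
    dotProduct_comm (A *ᵥ d), smul_eq_mul, div_mul_cancel₀ _ hd, add_neg_cancel]

theorem residual_dotProduct_step_of_conjugate (A : Matrix m m K) (b x d e : m → K) (s : K)
    (hde : e ⬝ᵥ A *ᵥ d = 0) :
    (A *ᵥ (x + s • d) - b) ⬝ᵥ e = (A *ᵥ x - b) ⬝ᵥ e := by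
  rw [mulVec_add, mulVec_smul, add_sub_right_comm, add_dotProduct, smul_dotProduct,
    dotProduct_comm (A *ᵥ d), hde, smul_zero, add_zero]

theorem residual_dotProduct_eq_zero_of_conjugate_steps {N : ℕ} (A : Matrix m m K) (b : m → K)
    (d : Fin N → m → K) (x : ℕ → m → K) (t : Fin N → K)
    (hconj : ∀ i j, i ≠ j → d i ⬝ᵥ A *ᵥ d j = 0) (hnz : ∀ i, d i ⬝ᵥ A *ᵥ d i ≠ 0)
    (ht : ∀ k, t k = -((A *ᵥ x k - b) ⬝ᵥ d k) / (d k ⬝ᵥ A *ᵥ d k))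
    (hstep : ∀ k : Fin N, x (k + 1) = x k + t k • d k) (k : Fin N) :
    (A *ᵥ x N - b) ⬝ᵥ d k = 0 := by
  suffices h : ∀ j, (k : ℕ) + 1 ≤ j → j ≤ N → (A *ᵥ x j - b) ⬝ᵥ d k = 0 from
    h N k.isLt le_rfl
  intro j hkj
  induction j, hkj using Nat.le_induction with
  | base =>
    intro _
    rw [hstep k, ht k]
    exact residual_dotProduct_exactLineSearch_eq_zero A b _ _ (hnz k)
  | succ j hkj ih =>
    intro hjN
    have hkj' : k ≠ ⟨j, hjN⟩ := Fin.ne_of_val_ne (by simp only; omega)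
    rw [show x (j + 1) = _ from hstep ⟨j, hjN⟩,
      residual_dotProduct_step_of_conjugate A b _ _ _ _ (hconj _ _ hkj')]
    exact ih (by omega)

end ConjugateDirections

theorem cg_finite_termination_general (n : ℕ) (A : Matrix (Fin n) (Fin n) ℝ) (hA : A.PosDef)
    (b : Fin n → ℝ) (d : Fin n → Fin n → ℝ) (hd0 : ∀ i, d i ≠ 0)
    (hconj : ∀ i j, i ≠ j → d i ⬝ᵥ A.mulVec (d j) = 0)
    (x : ℕ → Fin n → ℝ)
    (t : Fin n → ℝ)
    (ht : ∀ k : Fin n, t k = -((A.mulVec (x k) - b) ⬝ᵥ d k) / (d k ⬝ᵥ A.mulVec (d k)))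
    (hstep : ∀ k : Fin n, x (k + 1) = x k + t k • d k) :
    x n = A⁻¹.mulVec b := by
  have hnz : ∀ i, d i ⬝ᵥ A *ᵥ d i ≠ 0 := fun i => by
    simpa only [star_trivial] using (hA.dotProduct_mulVec_pos (hd0 i)).ne'
  have hres : A *ᵥ x n - b = 0 :=
    eq_zero_of_forall_dotProduct_eq_zero_of_linearIndependent
      (linearIndependent_of_conjugate hconj hnz) fun k => by
        rw [dotProduct_comm]
        exact residual_dotProduct_eq_zero_of_conjugate_steps A b d x t hconj hnz ht hstep k
  have := hA.isUnit.invertible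
  exact (inv_mulVec_eq_vec (sub_eq_zero.mp hres).symm).symm

/-- Finite termination of the conjugate-gradient method: successive exact line searches
along `n` pairwise `A`-conjugate nonzero directions, starting from any `x₀`, reach the
exact global minimizer `x* = A⁻¹ b` of `E x = (1/2) xᵀAx - bᵀx` after `n` steps. -/
theorem cg_finite_termination (n : ℕ) (A : Matrix (Fin n) (Fin n) ℝ) (hA : A.PosDef)
    (b : Fin n → ℝ) (d : Fin n → Fin n → ℝ) (hd0 : ∀ i, d i ≠ 0)
    (hconj : ∀ i j, i ≠ j → d i ⬝ᵥ A.mulVec (d j) = 0)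
    (x₀ : Fin n → ℝ) (x : ℕ → Fin n → ℝ) (hx0 : x 0 = x₀)
    (t : Fin n → ℝ)
    (ht : ∀ k : Fin n, t k = -((A.mulVec (x k) - b) ⬝ᵥ d k) / (d k ⬝ᵥ A.mulVec (d k)))
    (hstep : ∀ k : Fin n, x (k + 1) = x k + t k • d k) :
    x n = A⁻¹.mulVec b :=
  cg_finite_termination_general n A hA b d hd0 hconj x t ht hstep
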